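/- arXiv:1505.07341 — 5 statements merged into one kernel-verified Lean document; each statement's English description precedes it below -/
import Mathlib

section
/- In any interval representation α of a finite graph G, and for any vertex z, the local components of G at z (connected components of G with vertex z removed) whose supports are not contained in α(z) and which contain a neighbor of z number at most 2: at most one such component has support extending to the left of α(z) and at most one extending to the right. -/
def IsIntervalRep {V : Type*} (G : SimpleGraph V) (l r : V → ℝ) : Prop :=
  (∀ v, l v ≤ r v) ∧
  ∀ ⦃v w : V⦄, v ≠ w →
    (G.Adj v w ↔ (Set.Icc (l v) (r v) ∩ Set.Icc (l w) (r w)).Nonempty)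

/-- The local components of `G` at `z`: the vertex sets of the connected components
of the induced subgraph `G \ {z}`, viewed as subsets of `V`. -/
def localComponents {V : Type*} (G : SimpleGraph V) (z : V) : Set (Set V) :=
  {H | ∃ c : (G.induce {v | v ≠ z}).ConnectedComponent,
    H = Subtype.val '' {v | (G.induce {v | v ≠ z}).connectedComponentMk v = c}}

private lemma walk_cover {V : Type*} {G : SimpleGraph V} {l r : V → ℝ}
    (h : IsIntervalRep G l r) {s : Set V} {a b : s} (p : (G.induce s).Walk a b) :
    ∀ x y t : ℝ, x ∈ Set.Icc (l a.1) (r a.1) → y ∈ Set.Icc (l b.1) (r b.1) →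
    x ≤ t → t ≤ y →
    ∃ c : s, (G.induce s).Reachable a c ∧ t ∈ Set.Icc (l c.1) (r c.1) := by
  induction p with
  | nil =>
    intro x y t hx hy hxt hty
    exact ⟨_, SimpleGraph.Reachable.refl _, hx.1.trans hxt, hty.trans hy.2⟩
  | @cons u v w hadj q ih =>
    intro x y t hx hy hxt hty
    by_cases hle : t ≤ r u.1
    · exact ⟨u, SimpleGraph.Reachable.refl u, hx.1.trans hxt, hle⟩
    · push_neg at hle
      have hadj' : G.Adj u.1 v.1 := hadj
      obtain ⟨s0, hs0u, hs0v⟩ := (h.2 hadj'.ne).mp hadj'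
      obtain ⟨c, hc, htc⟩ := ih s0 y t hs0v hy (le_of_lt (lt_of_le_of_lt hs0u.2 hle)) hty
      exact ⟨c, hadj.reachable.trans hc, htc⟩

private lemma mem_ne {V : Type*} {G : SimpleGraph V} {z : V} {H : Set V}
    (hH : H ∈ localComponents G z) {p : V} (hp : p ∈ H) : p ≠ z := by
  obtain ⟨c, rfl⟩ := hH
  obtain ⟨q, _, rfl⟩ := hp
  exact q.2

private lemma cover_point {V : Type*} {G : SimpleGraph V} {l r : V → ℝ}
    (h : IsIntervalRep G l r) {z : V} {H : Set V} (hH : H ∈ localComponents G z)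
    {w u : V} (hw : w ∈ H) (hu : u ∈ H) {x y t : ℝ}
    (hx : x ∈ Set.Icc (l w) (r w)) (hy : y ∈ Set.Icc (l u) (r u))
    (hxt : x ≤ t) (hty : t ≤ y) : ∃ p ∈ H, t ∈ Set.Icc (l p) (r p) := by
  obtain ⟨c, rfl⟩ := hH
  obtain ⟨qw, hqw, rfl⟩ := hw
  obtain ⟨qu, hqu, rfl⟩ := hu
  have hreach : (G.induce {v | v ≠ z}).Reachable qw qu :=
    (SimpleGraph.ConnectedComponent.eq).mp (hqw.trans hqu.symm)
  obtain ⟨p⟩ := hreach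
  obtain ⟨c0, hc0, htc0⟩ := walk_cover h p x y t hx hy hxt hty
  have hqw' : (G.induce {v | v ≠ z}).connectedComponentMk qw = c := hqw
  exact ⟨c0.1, ⟨c0, show (G.induce {v | v ≠ z}).connectedComponentMk c0 = c from
    ((SimpleGraph.ConnectedComponent.sound hc0).symm).trans hqw', rfl⟩, htc0⟩

private lemma comp_eq {V : Type*} {G : SimpleGraph V} {l r : V → ℝ}
    (h : IsIntervalRep G l r) {z : V} {H1 H2 : Set V}
    (h1 : H1 ∈ localComponents G z) (h2 : H2 ∈ localComponents G z)
    {p1 p2 : V} {t : ℝ} (hp1 : p1 ∈ H1) (hp2 : p2 ∈ H2)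
    (ht1 : t ∈ Set.Icc (l p1) (r p1)) (ht2 : t ∈ Set.Icc (l p2) (r p2)) : H1 = H2 := by
  obtain ⟨c1, rfl⟩ := h1
  obtain ⟨c2, rfl⟩ := h2
  obtain ⟨q1, hq1, rfl⟩ := hp1
  obtain ⟨q2, hq2, rfl⟩ := hp2
  suffices hc : c1 = c2 by rw [hc]
  have hq1' : (G.induce {v | v ≠ z}).connectedComponentMk q1 = c1 := hq1
  have hq2' : (G.induce {v | v ≠ z}).connectedComponentMk q2 = c2 := hq2
  rw [← hq1', ← hq2']
  by_cases heq : q1 = q2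
  · rw [heq]
  · have hne : (q1 : V) ≠ (q2 : V) := fun hv => heq (Subtype.ext hv)
    have hadj : G.Adj q1.1 q2.1 := (h.2 hne).mpr ⟨t, ht1, ht2⟩
    have hadj' : (G.induce {v | v ≠ z}).Adj q1 q2 := hadj
    exact SimpleGraph.ConnectedComponent.sound hadj'.reachable

/-- In any interval representation, at most one local component at `z` containing a
neighbor of `z` has support extending strictly to the left of `α(z)`, at most one has
support extending strictly to the right, and hence at most two such components have
support not contained in `α(z)`. -/
theorem side_components_at_most_two {V : Type*} [Fintype V] (G : SimpleGraph V)
    (l r : V → ℝ) (h : IsIntervalRep G l r) (z : V) :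
    {H ∈ localComponents G z | (∃ v ∈ H, G.Adj v z) ∧
        ∃ x ∈ ⋃ v ∈ H, Set.Icc (l v) (r v), x < l z}.ncard ≤ 1 ∧
    {H ∈ localComponents G z | (∃ v ∈ H, G.Adj v z) ∧
        ∃ x ∈ ⋃ v ∈ H, Set.Icc (l v) (r v), r z < x}.ncard ≤ 1 ∧
    {H ∈ localComponents G z | (∃ v ∈ H, G.Adj v z) ∧
        ¬ (⋃ v ∈ H, Set.Icc (l v) (r v)) ⊆ Set.Icc (l z) (r z)}.ncard ≤ 2 := by
  classical
  set A := {H ∈ localComponents G z | (∃ v ∈ H, G.Adj v z) ∧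
      ∃ x ∈ ⋃ v ∈ H, Set.Icc (l v) (r v), x < l z} with hAdef
  set B := {H ∈ localComponents G z | (∃ v ∈ H, G.Adj v z) ∧
      ∃ x ∈ ⋃ v ∈ H, Set.Icc (l v) (r v), r z < x} with hBdef
  -- For any H in A, there is p ∈ H with l z ∈ Icc (l p) (r p)
  have keyA : ∀ H ∈ A, ∃ p ∈ H, l z ∈ Set.Icc (l p) (r p) := by
    rintro H ⟨hH, ⟨v, hv, hvz⟩, x, hx, hxlt⟩
    simp only [Set.mem_iUnion] at hx
    obtain ⟨w, hw, hxw⟩ := hx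
    obtain ⟨y, hyv, hyz⟩ := (h.2 (mem_ne hH hv)).mp hvz
    exact cover_point h hH hw hv hxw hyv hxlt.le hyz.1
  have keyB : ∀ H ∈ B, ∃ p ∈ H, r z ∈ Set.Icc (l p) (r p) := by
    rintro H ⟨hH, ⟨v, hv, hvz⟩, x, hx, hxlt⟩
    simp only [Set.mem_iUnion] at hx
    obtain ⟨w, hw, hxw⟩ := hx
    obtain ⟨y, hyv, hyz⟩ := (h.2 (mem_ne hH hv)).mp hvz
    exact cover_point h hH hv hw hyv hxw hyz.2 hxlt.le
  have hA : A.ncard ≤ 1 := by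
    rw [Set.ncard_le_one (Set.toFinite A)]
    intro H1 h1 H2 h2
    obtain ⟨p1, hp1, ht1⟩ := keyA H1 h1
    obtain ⟨p2, hp2, ht2⟩ := keyA H2 h2
    exact comp_eq h h1.1 h2.1 hp1 hp2 ht1 ht2
  have hB : B.ncard ≤ 1 := by
    rw [Set.ncard_le_one (Set.toFinite B)]
    intro H1 h1 H2 h2
    obtain ⟨p1, hp1, ht1⟩ := keyB H1 h1
    obtain ⟨p2, hp2, ht2⟩ := keyB H2 h2
    exact comp_eq h h1.1 h2.1 hp1 hp2 ht1 ht2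
  refine ⟨hA, hB, ?_⟩
  have hsub : {H ∈ localComponents G z | (∃ v ∈ H, G.Adj v z) ∧
      ¬ (⋃ v ∈ H, Set.Icc (l v) (r v)) ⊆ Set.Icc (l z) (r z)} ⊆ A ∪ B := by
    rintro H ⟨hH, hadj, hns⟩
    rw [Set.not_subset] at hns
    obtain ⟨x, hx, hxn⟩ := hns
    rw [Set.mem_Icc, not_and_or, not_le, not_le] at hxn
    rcases hxn with hl | hr
    · exact Or.inl ⟨hH, hadj, x, hx, hl⟩
    · exact Or.inr ⟨hH, hadj, x, hx, hr⟩
  calc _ ≤ (A ∪ B).ncard := Set.ncard_le_ncard hsub (Set.toFinite _)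
    _ ≤ A.ncard + B.ncard := Set.ncard_union_le A B
    _ ≤ 2 := by omega
end

section
/- Let α be an interval representation of a connected graph G and z a vertex. If H is a local component of G at z all of whose vertices are adjacent to z, and the support of H is contained in α(z), then in the representation α every vertex of H has its interval properly contained in α(z), so imp_α(z) ≥ |H|. -/
noncomputable def impAt {V : Type*} (l r : V → ℝ) (z : V) : ℕ :=
  {w : V | w ≠ z ∧ Set.Icc (l w) (r w) ⊂ Set.Icc (l z) (r z)}.ncard

/-- If `H` is a local component of a connected graph `G` at `z` all of whose vertices
are adjacent to `z`, whose support lies inside `α(z)` (all intervals being distinct),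
then every interval of `H` is properly contained in `α(z)`, whence
`imp_α(z) ≥ |H|`. -/
theorem confined_component_contributes {V : Type*} [Fintype V] (G : SimpleGraph V)
    (hG : G.Connected) (l r : V → ℝ) (h : IsIntervalRep G l r)
    (hdist : ∀ v w : V, v ≠ w → Set.Icc (l v) (r v) ≠ Set.Icc (l w) (r w))
    (z : V) (H : Set V) (hH : H ∈ localComponents G z)
    (hadj : ∀ v ∈ H, G.Adj v z)
    (hsupp : (⋃ v ∈ H, Set.Icc (l v) (r v)) ⊆ Set.Icc (l z) (r z)) :
    (∀ v ∈ H, Set.Icc (l v) (r v) ⊂ Set.Icc (l z) (r z)) ∧ H.ncard ≤ impAt l r z := by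
  have key : ∀ v ∈ H, Set.Icc (l v) (r v) ⊂ Set.Icc (l z) (r z) := by
    intro v hv
    have hvz : v ≠ z := by
      obtain ⟨c, rfl⟩ := hH
      obtain ⟨⟨v', hv'⟩, _, rfl⟩ := hv
      exact hv'
    have hsub : Set.Icc (l v) (r v) ⊆ Set.Icc (l z) (r z) :=
      (Set.subset_biUnion_of_mem hv).trans hsupp
    exact hsub.ssubset_of_ne (hdist v z hvz)
  refine ⟨key, Set.ncard_le_ncard ?_ (Set.toFinite _)⟩
  intro v hv
  refine ⟨?_, key v hv⟩
  obtain ⟨c, rfl⟩ := hH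
  obtain ⟨⟨v', hv'⟩, _, rfl⟩ := hv
  exact hv'
end

section
/- Every proper induced subgraph of the star K_{1,p+3} is p-improper; combined with the fact that K_{1,p+3} itself is not p-improper, K_{1,p+3} is a minimal forbidden subgraph for the class of p-improper interval graphs. -/
/-- `p`-improper with all intervals pairwise distinct. -/
def PImproper {V : Type*} (p : ℕ) (G : SimpleGraph V) : Prop :=
  ∃ l r : V → ℝ, IsIntervalRep G l r ∧
    (∀ v w : V, v ≠ w → Set.Icc (l v) (r v) ≠ Set.Icc (l w) (r w)) ∧
    ∀ z : V, impAt l r z ≤ p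

/-- The star `K_{1,m}` on `Fin (m+1)` with center `0`. -/
def starGraph (m : ℕ) : SimpleGraph (Fin (m + 1)) :=
  SimpleGraph.fromRel (fun v _ => v = 0)

lemma icc_endpoints_eq {a b c d : ℝ} (h1 : a ≤ b) (h2 : c ≤ d)
    (h : Set.Icc a b = Set.Icc c d) : a = c ∧ b = d := by
  have ha : a ∈ Set.Icc c d := h ▸ Set.left_mem_Icc.2 h1
  have hb : b ∈ Set.Icc c d := h ▸ Set.right_mem_Icc.2 h1
  have hc : c ∈ Set.Icc a b := h.symm ▸ Set.left_mem_Icc.2 h2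
  have hd : d ∈ Set.Icc a b := h.symm ▸ Set.right_mem_Icc.2 h2
  simp only [Set.mem_Icc] at ha hb hc hd
  constructor <;> linarith

/-- Every proper induced subgraph of `K_{1,p+3}` is `p`-improper, while `K_{1,p+3}`
itself is not: `K_{1,p+3}` is a minimal forbidden subgraph for the class of
`p`-improper interval graphs. -/
theorem star_minimal_forbidden (p : ℕ) :
    (∀ S : Set (Fin (p + 4)), S ≠ Set.univ →
      PImproper p ((starGraph (p + 3)).induce S)) ∧
    ¬ PImproper p (starGraph (p + 3)) := by
  constructor
  · -- every proper induced subgraph is p-improper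
    intro S hS
    obtain ⟨m, hm⟩ : ∃ m, m ∉ S := by
      by_contra h
      push_neg at h
      exact hS (Set.eq_univ_iff_forall.mpr h)
    -- two designated "sticking-out" leaves, distinct from 0 and from m
    obtain ⟨a, b, ha0, hb0, hab, ham, hbm⟩ :
        ∃ a b : Fin (p + 4), a ≠ 0 ∧ b ≠ 0 ∧ a ≠ b ∧ a ≠ m ∧ b ≠ m := by
      rcases eq_or_ne m ⟨1, by omega⟩ with h1 | h1
      · refine ⟨⟨2, by omega⟩, ⟨3, by omega⟩, ?_, ?_, ?_, ?_, ?_⟩ <;> subst h1 <;>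
          intro h <;> exact absurd (congrArg Fin.val h) (by simp)
      · rcases eq_or_ne m ⟨3, by omega⟩ with h3 | h3
        · refine ⟨⟨1, by omega⟩, ⟨2, by omega⟩, ?_, ?_, ?_, ?_, ?_⟩ <;> subst h3 <;>
            intro h <;> exact absurd (congrArg Fin.val h) (by simp)
        · refine ⟨⟨1, by omega⟩, ⟨3, by omega⟩, ?_, ?_, ?_, Ne.symm h1, Ne.symm h3⟩ <;>
            intro h <;> exact absurd (congrArg Fin.val h) (by simp)
    set l : Fin (p + 4) → ℝ := fun v =>
      if v = 0 then 0 else if v = a then -1 else if v = b then (p : ℝ) + 13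
      else (v.val : ℝ) + 2 with hl_def
    set r : Fin (p + 4) → ℝ := fun v =>
      if v = 0 then (p : ℝ) + 14 else if v = a then 1 else if v = b then (p : ℝ) + 15
      else (v.val : ℝ) + 2 with hr_def
    have hval : ∀ v : Fin (p + 4), (0 : ℝ) ≤ (v.val : ℝ) ∧ (v.val : ℝ) ≤ (p : ℝ) + 3 := by
      intro v
      have h1 : v.val ≤ p + 3 := by omega
      refine ⟨by positivity, ?_⟩
      calc (v.val : ℝ) ≤ ((p + 3 : ℕ) : ℝ) := by exact_mod_cast h1
        _ = (p : ℝ) + 3 := by push_cast; ring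
    have hcase : ∀ v : Fin (p + 4),
        (v = 0 ∧ l v = 0 ∧ r v = (p : ℝ) + 14) ∨
        (v = a ∧ l v = -1 ∧ r v = 1) ∨
        (v = b ∧ l v = (p : ℝ) + 13 ∧ r v = (p : ℝ) + 15) ∨
        (v ≠ 0 ∧ v ≠ a ∧ v ≠ b ∧ l v = (v.val : ℝ) + 2 ∧ r v = (v.val : ℝ) + 2) := by
      intro v
      by_cases h0 : v = 0
      · exact Or.inl ⟨h0, by simp [hl_def, h0], by simp [hr_def, h0]⟩
      by_cases hva : v = a
      · exact Or.inr (Or.inl ⟨hva, by simp [hl_def, hva, ha0], by simp [hr_def, hva, ha0]⟩)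
      by_cases hvb : v = b
      · exact Or.inr (Or.inr (Or.inl ⟨hvb, by simp [hl_def, hvb, hb0, hab.symm],
          by simp [hr_def, hvb, hb0, hab.symm]⟩))
      · exact Or.inr (Or.inr (Or.inr ⟨h0, hva, hvb, by simp [hl_def, h0, hva, hvb],
          by simp [hr_def, h0, hva, hvb]⟩))
    have hp0 : (0 : ℝ) ≤ (p : ℝ) := by positivity
    have hlr : ∀ v, l v ≤ r v := by
      intro v
      rcases hcase v with ⟨_, h1, h2⟩ | ⟨_, h1, h2⟩ | ⟨_, h1, h2⟩ | ⟨_, _, _, h1, h2⟩ <;>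
        rw [h1, h2] <;> linarith
    have h0lr : l 0 = 0 ∧ r 0 = (p : ℝ) + 14 := ⟨by simp [hl_def], by simp [hr_def]⟩
    have fwd : ∀ y : Fin (p + 4), l 0 ≤ r y ∧ l y ≤ r 0 := by
      intro y
      have hy3 := hval y
      rcases hcase y with ⟨_, h1, h2⟩ | ⟨_, h1, h2⟩ | ⟨_, h1, h2⟩ | ⟨_, _, _, h1, h2⟩ <;>
        rw [h1, h2, h0lr.1, h0lr.2] <;> constructor <;> linarith
    have bwd : ∀ x y : Fin (p + 4), x ≠ 0 → y ≠ 0 → x ≠ y →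
        ¬(l x ≤ r y ∧ l y ≤ r x) := by
      rintro x y hx0 hy0 hxy ⟨h1, h2⟩
      have hx3 := hval x; have hy3 := hval y
      rcases hcase x with ⟨hx, hxl, hxr⟩ | ⟨hx, hxl, hxr⟩ | ⟨hx, hxl, hxr⟩ |
          ⟨hx, hxa, hxb, hxl, hxr⟩ <;>
        rcases hcase y with ⟨hy, hyl, hyr⟩ | ⟨hy, hyl, hyr⟩ | ⟨hy, hyl, hyr⟩ |
            ⟨hy, hya, hyb, hyl, hyr⟩ <;>
          simp only [hxl, hxr, hyl, hyr] at h1 h2 <;>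
          first
            | exact hx0 hx
            | exact hy0 hy
            | exact hxy (hx.trans hy.symm)
            | linarith
            | exact hxy (Fin.ext (by exact_mod_cast
                (le_antisymm (by linarith) (by linarith) : (x.val : ℝ) = (y.val : ℝ))))
    have hmeet_iff : ∀ v w : Fin (p + 4),
        (Set.Icc (l v) (r v) ∩ Set.Icc (l w) (r w)).Nonempty ↔ l v ≤ r w ∧ l w ≤ r v := by
      intro v w
      rw [Set.Icc_inter_Icc, Set.nonempty_Icc, sup_le_iff, le_inf_iff, le_inf_iff]
      constructor
      · rintro ⟨⟨_, h1⟩, ⟨h2, _⟩⟩; exact ⟨h1, h2⟩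
      · rintro ⟨h1, h2⟩; exact ⟨⟨hlr v, h1⟩, ⟨h2, hlr w⟩⟩
    -- the representation
    refine ⟨fun w => l w.1, fun w => r w.1, ⟨fun v => hlr v.1, ?_⟩, ?_, ?_⟩
    · intro v w hvw
      have hvw' : (v : Fin (p + 4)) ≠ (w : Fin (p + 4)) :=
        fun h => hvw (Subtype.coe_injective h)
      have hadj : ((starGraph (p + 3)).induce S).Adj v w ↔
          ((v : Fin (p + 4)) = 0 ∨ (w : Fin (p + 4)) = 0) := by
        simp [starGraph, SimpleGraph.induce, SimpleGraph.fromRel_adj, hvw']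
      rw [hadj, hmeet_iff]
      constructor
      · rintro (h0 | h0)
        · rw [h0]; exact fwd w.1
        · rw [h0]; exact ⟨(fwd v.1).2, (fwd v.1).1⟩
      · intro h
        by_contra hno
        push_neg at hno
        exact bwd v.1 w.1 hno.1 hno.2 hvw' h
    · -- distinctness
      intro v w hvw h
      have hvw' : (v : Fin (p + 4)) ≠ (w : Fin (p + 4)) :=
        fun h => hvw (Subtype.coe_injective h)
      obtain ⟨hL, hR⟩ := icc_endpoints_eq (hlr v.1) (hlr w.1) h
      have hx3 := hval v.1; have hy3 := hval w.1
      rcases hcase v.1 with ⟨hx, hxl, hxr⟩ | ⟨hx, hxl, hxr⟩ | ⟨hx, hxl, hxr⟩ |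
          ⟨hx, hxa, hxb, hxl, hxr⟩ <;>
        rcases hcase w.1 with ⟨hy, hyl, hyr⟩ | ⟨hy, hyl, hyr⟩ | ⟨hy, hyl, hyr⟩ |
            ⟨hy, hya, hyb, hyl, hyr⟩ <;>
          simp only [hxl, hxr, hyl, hyr] at hL hR <;>
          first
            | exact hvw' (hx.trans hy.symm)
            | linarith
            | exact hvw' (Fin.ext (by exact_mod_cast
                (hL : ((v : Fin (p + 4)).val : ℝ) + 2 = ((w : Fin (p + 4)).val : ℝ) + 2)
                  |> fun hh => (by linarith : ((v : Fin (p + 4)).val : ℝ) = ((w : Fin (p + 4)).val : ℝ))))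
    · -- impropriety bound
      intro z
      by_cases hz0 : (z : Fin (p + 4)) = 0
      · -- center: at most p intervals properly contained
        have hm0 : m ≠ 0 := fun h => hm (h ▸ hz0 ▸ z.2)
        have hlz : l z.1 = 0 := by rw [hz0]; exact h0lr.1
        have hrz : r z.1 = (p : ℝ) + 14 := by rw [hz0]; exact h0lr.2
        have hT : ({v : Fin (p + 4) | v ≠ 0 ∧ v ≠ a ∧ v ≠ b ∧ v ≠ m}).ncard = p := by
          have hcompl : {v : Fin (p + 4) | v ≠ 0 ∧ v ≠ a ∧ v ≠ b ∧ v ≠ m} =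
              ({0, a, b, m} : Set (Fin (p + 4)))ᶜ := by
            ext v
            simp only [Set.mem_setOf_eq, Set.mem_compl_iff, Set.mem_insert_iff,
              Set.mem_singleton_iff, not_or]
          have hc4 : ({0, a, b, m} : Set (Fin (p + 4))).ncard = 4 := by
            rw [Set.ncard_insert_of_notMem (by simp [Ne.symm ha0, Ne.symm hb0, Ne.symm hm0]),
              Set.ncard_insert_of_notMem (by simp [hab, ham]),
              Set.ncard_insert_of_notMem (by simp [hbm]),
              Set.ncard_singleton]
          have h5 := Set.ncard_add_ncard_compl ({0, a, b, m} : Set (Fin (p + 4)))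
          rw [hc4] at h5
          simp only [Nat.card_eq_fintype_card, Fintype.card_fin] at h5
          rw [hcompl]
          omega
        have hsub : Subtype.val '' {w : ↥S | w ≠ z ∧
            Set.Icc (l w.1) (r w.1) ⊂ Set.Icc (l z.1) (r z.1)} ⊆
            {v : Fin (p + 4) | v ≠ 0 ∧ v ≠ a ∧ v ≠ b ∧ v ≠ m} := by
          rintro _ ⟨w, ⟨hwz, hss⟩, rfl⟩
          refine ⟨?_, ?_, ?_, fun h => hm (h ▸ w.2)⟩
          · intro h
            exact hwz (Subtype.coe_injective (h.trans hz0.symm))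
          · intro h
            have h1 : l w.1 = -1 := by rw [h]; simp [hl_def, ha0]
            have h2 := hss.subset (Set.left_mem_Icc.2 (hlr w.1))
            rw [hlz, hrz, h1] at h2
            simp only [Set.mem_Icc] at h2
            linarith [h2.1]
          · intro h
            have h1 : r w.1 = (p : ℝ) + 15 := by rw [h]; simp [hr_def, hb0, hab.symm]
            have h2 := hss.subset (Set.right_mem_Icc.2 (hlr w.1))
            rw [hlz, hrz, h1] at h2
            simp only [Set.mem_Icc] at h2
            linarith [h2.2]
        calc impAt (fun w : ↥S => l w.1) (fun w : ↥S => r w.1) z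
            = (Subtype.val '' {w : ↥S | w ≠ z ∧
                Set.Icc (l w.1) (r w.1) ⊂ Set.Icc (l z.1) (r z.1)}).ncard := by
              rw [Set.ncard_image_of_injective _ Subtype.coe_injective]; rfl
          _ ≤ ({v : Fin (p + 4) | v ≠ 0 ∧ v ≠ a ∧ v ≠ b ∧ v ≠ m}).ncard :=
              Set.ncard_le_ncard hsub (Set.toFinite _)
          _ = p := hT
      · -- non-center: nothing properly contained
        have hempty : {w : ↥S | w ≠ z ∧
            Set.Icc (l w.1) (r w.1) ⊂ Set.Icc (l z.1) (r z.1)} = ∅ := by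
          ext w
          simp only [Set.mem_setOf_eq, Set.mem_empty_iff_false, iff_false, not_and]
          intro hwz hss
          have hwz' : (w : Fin (p + 4)) ≠ (z : Fin (p + 4)) :=
            fun h => hwz (Subtype.coe_injective h)
          obtain ⟨hL, hR⟩ := (Set.Icc_subset_Icc_iff (hlr w.1)).1 hss.subset
          have hx3 := hval w.1; have hy3 := hval z.1
          rcases hcase w.1 with ⟨hx, hxl, hxr⟩ | ⟨hx, hxl, hxr⟩ | ⟨hx, hxl, hxr⟩ |
              ⟨hx, hxa, hxb, hxl, hxr⟩ <;>
            rcases hcase z.1 with ⟨hy, hyl, hyr⟩ | ⟨hy, hyl, hyr⟩ | ⟨hy, hyl, hyr⟩ |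
                ⟨hy, hya, hyb, hyl, hyr⟩ <;>
              simp only [hxl, hxr, hyl, hyr] at hL hR <;>
              first
                | exact hz0 hy
                | exact hwz' (hx.trans hy.symm)
                | linarith
                | exact hwz' (Fin.ext (by exact_mod_cast
                    (le_antisymm (by linarith) (by linarith) :
                      ((w : Fin (p + 4)).val : ℝ) = ((z : Fin (p + 4)).val : ℝ))))
        show impAt (fun w : ↥S => l w.1) (fun w : ↥S => r w.1) z ≤ p
        unfold impAt
        rw [hempty]
        simp
  · -- K_{1,p+3} itself is not p-improper
    rintro ⟨l, r, ⟨hlr, hadj⟩, hdist, hbound⟩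
    have hmeet : ∀ w : Fin (p + 4), w ≠ 0 → l w ≤ r 0 ∧ l 0 ≤ r w := by
      intro w hw
      have hadjw : (starGraph (p + 3)).Adj w 0 := by
        simp [starGraph, SimpleGraph.fromRel_adj, hw]
      have h := (hadj hw).1 hadjw
      rw [Set.Icc_inter_Icc, Set.nonempty_Icc, sup_le_iff, le_inf_iff, le_inf_iff] at h
      exact ⟨h.1.2, h.2.1⟩
    have hdisj : ∀ v w : Fin (p + 4), v ≠ 0 → w ≠ 0 → v ≠ w →
        ¬(l v ≤ r w ∧ l w ≤ r v) := by
      intro v w hv hw hvw hc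
      have hA : (starGraph (p + 3)).Adj v w := by
        refine (hadj hvw).2 ?_
        rw [Set.Icc_inter_Icc, Set.nonempty_Icc]
        exact sup_le (le_inf (hlr v) hc.1) (le_inf hc.2 (hlr w))
      simp [starGraph, SimpleGraph.fromRel_adj, hv, hw] at hA
    set C : Set (Fin (p + 4)) :=
      {w | w ≠ 0 ∧ Set.Icc (l w) (r w) ⊂ Set.Icc (l 0) (r 0)} with hC_def
    set A1 : Set (Fin (p + 4)) := {w | w ≠ 0 ∧ l w ≤ l 0 ∧ l 0 ≤ r w} with hA1_def
    set A2 : Set (Fin (p + 4)) := {w | w ≠ 0 ∧ l w ≤ r 0 ∧ r 0 ≤ r w} with hA2_def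
    have hA1card : A1.ncard ≤ 1 := by
      rw [Set.ncard_le_one (Set.toFinite _)]
      rintro x ⟨hx0, hx1, hx2⟩ y ⟨hy0, hy1, hy2⟩
      by_contra hne
      exact hdisj x y hx0 hy0 hne ⟨hx1.trans hy2, hy1.trans hx2⟩
    have hA2card : A2.ncard ≤ 1 := by
      rw [Set.ncard_le_one (Set.toFinite _)]
      rintro x ⟨hx0, hx1, hx2⟩ y ⟨hy0, hy1, hy2⟩
      by_contra hne
      exact hdisj x y hx0 hy0 hne ⟨hx1.trans hy2, hy1.trans hx2⟩
    have hCcard : C.ncard ≤ p := hbound 0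
    have hcover : {w : Fin (p + 4) | w ≠ 0} ⊆ C ∪ A1 ∪ A2 := by
      intro w hw
      simp only [Set.mem_setOf_eq] at hw
      obtain ⟨h1, h2⟩ := hmeet w hw
      by_cases hsub : Set.Icc (l w) (r w) ⊆ Set.Icc (l 0) (r 0)
      · exact Or.inl (Or.inl ⟨hw, hsub.ssubset_of_ne (hdist w 0 hw)⟩)
      · rw [Set.Icc_subset_Icc_iff (hlr w)] at hsub
        push_neg at hsub
        by_cases hL : l 0 ≤ l w
        · exact Or.inr ⟨hw, h1, le_of_lt (hsub hL)⟩
        · exact Or.inl (Or.inr ⟨hw, le_of_not_ge hL, h2⟩)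
    have hcount : ({w : Fin (p + 4) | w ≠ 0}).ncard = p + 3 := by
      have hcompl : {w : Fin (p + 4) | w ≠ 0} = ({0} : Set (Fin (p + 4)))ᶜ := by
        ext v; simp
      have h5 := Set.ncard_add_ncard_compl ({0} : Set (Fin (p + 4)))
      rw [Set.ncard_singleton] at h5
      simp only [Nat.card_eq_fintype_card, Fintype.card_fin] at h5
      rw [hcompl]
      omega
    have h1 := Set.ncard_le_ncard hcover (Set.toFinite _)
    have h2 := Set.ncard_union_le (C ∪ A1) A2
    have h3 := Set.ncard_union_le C A1
    omega
end

section
/- Let G be a graph with interval representation α and let z be a vertex. Then at most one local component of G at z all of whose vertices are adjacent to z can have support extending strictly to the right of α(z), and at most one such local component can have support extending strictly to the left of α(z). -/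
lemma localComponents_eq_of_adj {V : Type*} (G : SimpleGraph V) (z : V)
    {H₁ H₂ : Set V} (h₁ : H₁ ∈ localComponents G z) (h₂ : H₂ ∈ localComponents G z)
    {v₁ v₂ : V} (hv₁ : v₁ ∈ H₁) (hv₂ : v₂ ∈ H₂)
    (hadj : v₁ = v₂ ∨ G.Adj v₁ v₂) : H₁ = H₂ := by
  obtain ⟨c₁, rfl⟩ := h₁
  obtain ⟨c₂, rfl⟩ := h₂
  obtain ⟨⟨w₁, hw₁⟩, hm₁, rfl⟩ := hv₁
  obtain ⟨⟨w₂, hw₂⟩, hm₂, he⟩ := hv₂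
  simp only [Set.mem_setOf_eq] at hm₁ hm₂
  have hc : c₁ = c₂ := by
    rcases hadj with heq | hadj
    · rw [← hm₁, ← hm₂]
      congr 1
      exact Subtype.ext (heq.trans he.symm)
    · rw [← hm₁, ← hm₂]
      apply SimpleGraph.ConnectedComponent.sound
      apply SimpleGraph.Adj.reachable
      show G.Adj w₁ w₂
      subst he; exact hadj
  rw [hc]

/-- At most one local component at `z` all of whose vertices are adjacent to `z` can
have support extending strictly to the right of `α(z)`, and likewise at most one can
extend strictly to the left: two such components must coincide. -/
theorem at_most_one_component_each_side {V : Type*} [Fintype V] (G : SimpleGraph V)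
    (l r : V → ℝ) (h : IsIntervalRep G l r) (z : V) :
    (∀ H₁ ∈ localComponents G z, ∀ H₂ ∈ localComponents G z,
      (∀ v ∈ H₁, G.Adj v z) → (∀ v ∈ H₂, G.Adj v z) →
      (∃ x ∈ ⋃ v ∈ H₁, Set.Icc (l v) (r v), r z < x) →
      (∃ x ∈ ⋃ v ∈ H₂, Set.Icc (l v) (r v), r z < x) → H₁ = H₂) ∧
    (∀ H₁ ∈ localComponents G z, ∀ H₂ ∈ localComponents G z,
      (∀ v ∈ H₁, G.Adj v z) → (∀ v ∈ H₂, G.Adj v z) →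
      (∃ x ∈ ⋃ v ∈ H₁, Set.Icc (l v) (r v), x < l z) →
      (∃ x ∈ ⋃ v ∈ H₂, Set.Icc (l v) (r v), x < l z) → H₁ = H₂) := by
  obtain ⟨hlr, hrep⟩ := h
  constructor
  · intro H₁ hH₁ H₂ hH₂ ha₁ ha₂ ⟨x₁, hx₁, hrz₁⟩ ⟨x₂, hx₂, hrz₂⟩
    simp only [Set.mem_iUnion] at hx₁ hx₂
    obtain ⟨v₁, hv₁, hxv₁⟩ := hx₁
    obtain ⟨v₂, hv₂, hxv₂⟩ := hx₂
    -- r z is in both intervals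
    have key : ∀ (v : V), v ∈ H₁ ∪ H₂ → (∀ u ∈ H₁ ∪ H₂, G.Adj u z) →
        ∀ x ∈ Set.Icc (l v) (r v), r z < x → r z ∈ Set.Icc (l v) (r v) := by
      intro v hv hadj x hx hrz
      have hvz : G.Adj v z := hadj v hv
      have := (hrep hvz.ne).mp hvz
      obtain ⟨y, hy1, hy2⟩ := this
      exact ⟨hy1.1.trans hy2.2, le_of_lt (lt_of_lt_of_le hrz hx.2)⟩
    have hadj : ∀ u ∈ H₁ ∪ H₂, G.Adj u z := by
      intro u hu; rcases hu with hu | hu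
      exacts [ha₁ u hu, ha₂ u hu]
    have hm₁ := key v₁ (Or.inl hv₁) hadj x₁ hxv₁ hrz₁
    have hm₂ := key v₂ (Or.inr hv₂) hadj x₂ hxv₂ hrz₂
    apply localComponents_eq_of_adj G z hH₁ hH₂ hv₁ hv₂
    by_cases hne : v₁ = v₂
    · exact Or.inl hne
    · exact Or.inr ((hrep hne).mpr ⟨r z, hm₁, hm₂⟩)
  · intro H₁ hH₁ H₂ hH₂ ha₁ ha₂ ⟨x₁, hx₁, hrz₁⟩ ⟨x₂, hx₂, hrz₂⟩
    simp only [Set.mem_iUnion] at hx₁ hx₂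
    obtain ⟨v₁, hv₁, hxv₁⟩ := hx₁
    obtain ⟨v₂, hv₂, hxv₂⟩ := hx₂
    have key : ∀ (v : V), G.Adj v z →
        ∀ x ∈ Set.Icc (l v) (r v), x < l z → l z ∈ Set.Icc (l v) (r v) := by
      intro v hvz x hx hlz
      obtain ⟨y, hy1, hy2⟩ := (hrep hvz.ne).mp hvz
      exact ⟨le_of_lt (lt_of_le_of_lt hx.1 hlz), hy2.1.trans hy1.2⟩
    have hm₁ := key v₁ (ha₁ v₁ hv₁) x₁ hxv₁ hrz₁
    have hm₂ := key v₂ (ha₂ v₂ hv₂) x₂ hxv₂ hrz₂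
    apply localComponents_eq_of_adj G z hH₁ hH₂ hv₁ hv₂
    by_cases hne : v₁ = v₂
    · exact Or.inl hne
    · exact Or.inr ((hrep hne).mpr ⟨l z, hm₁, hm₂⟩)
end

section
/- Let G be a connected interval graph with representation α, z a vertex, and H a local component of G at z containing a vertex of distance at least 2 from z (an exterior component). Then the support of H is not contained in α(z): it contains a point outside α(z). -/
/-- An exterior local component at `z` (one containing a vertex at graph distance
at least `2` from `z`) has support not contained in `α(z)`. -/
theorem exterior_component_support_not_contained {V : Type*} [Fintype V]
    (G : SimpleGraph V) (hG : G.Connected) (l r : V → ℝ)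
    (h : IsIntervalRep G l r) (z : V) (H : Set V)
    (hH : H ∈ localComponents G z) (hext : ∃ v ∈ H, 2 ≤ G.dist z v) :
    ∃ x ∈ ⋃ v ∈ H, Set.Icc (l v) (r v), x ∉ Set.Icc (l z) (r z) := by
  obtain ⟨v, hvH, hdist⟩ := hext
  have hvz : v ≠ z := by
    rintro rfl
    simp [SimpleGraph.dist_self] at hdist
  by_contra hcon
  push_neg at hcon
  have hsub : Set.Icc (l v) (r v) ⊆ Set.Icc (l z) (r z) := fun x hx =>
    hcon x (Set.mem_biUnion hvH hx)
  have hne : (Set.Icc (l v) (r v) ∩ Set.Icc (l z) (r z)).Nonempty := by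
    refine ⟨l v, ?_, hsub ?_⟩ <;> exact Set.left_mem_Icc.2 (h.1 v)
  have hadj : G.Adj v z := (h.2 hvz).2 hne
  have : G.dist z v = 1 := SimpleGraph.dist_eq_one_iff_adj.2 hadj.symm
  omega
end
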